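/- If L ⪯ R are arrow systems and the walk L tends to +∞, then every regeneration point of L is a regeneration point of R: 𝒟(L) ⊆ 𝒟(R). -/

import Mathlib

open Filter Topology

/-- Number of visits of the walk `X` to site `x` up to and including time `n`. -/
def visits (X : ℕ → ℤ) (n : ℕ) (x : ℤ) : ℕ :=
  ((Finset.range (n + 1)).filter (fun m => X m = x)).card

/-- `E` is an arrow system: each arrow is `+1` or `-1`. -/
def IsArrow (E : ℤ → ℕ → ℤ) : Prop := ∀ x k, E x k = 1 ∨ E x k = -1

/-- `X` is the walk defined by the arrow system `E`. -/
def IsWalk (E : ℤ → ℕ → ℤ) (X : ℕ → ℤ) : Prop :=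
  X 0 = 0 ∧ ∀ n, X (n + 1) = X n + E (X n) (visits X n (X n))

/-- The partial-sum domination order `L ⪯ R` on arrow systems. -/
def Prec (L R : ℤ → ℕ → ℤ) : Prop :=
  ∀ x k, ∑ j ∈ Finset.Icc 1 k, L x j ≤ ∑ j ∈ Finset.Icc 1 k, R x j

/-- `T` is the first hitting time of `x` by the walk `X`. -/
def FirstHit (X : ℕ → ℤ) (x : ℤ) (T : ℕ) : Prop :=
  X T = x ∧ ∀ m < T, X m ≠ x

/-- `x ≥ 0` is a regeneration point of the walk `X`. -/
def Regen (X : ℕ → ℤ) (x : ℤ) : Prop :=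
  0 ≤ x ∧ ∃ T, FirstHit X x T ∧ ∀ n ≥ T, x ≤ X n

/- ---------------------------------------------------------------------------
Auxiliary material
--------------------------------------------------------------------------- -/

/-- Number of up-steps from site `y` strictly before time `n`. -/
def upSteps (X : ℕ → ℤ) (n : ℕ) (y : ℤ) : ℕ :=
  ((Finset.range n).filter (fun m => X m = y ∧ X (m + 1) = y + 1)).card

/-- Number of down-steps from site `y` strictly before time `n`. -/
def downSteps (X : ℕ → ℤ) (n : ℕ) (y : ℤ) : ℕ :=
  ((Finset.range n).filter (fun m => X m = y ∧ X (m + 1) = y - 1)).card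

/-- Number of `-1` arrows among the first `k` arrows of `E` at `y`. -/
def minusCount (E : ℤ → ℕ → ℤ) (y : ℤ) (k : ℕ) : ℕ :=
  ((Finset.Icc 1 k).filter (fun j => E y j = -1)).card

lemma filter_range_succ (p : ℕ → Prop) [DecidablePred p] (n : ℕ) :
    ((Finset.range (n + 1)).filter p).card
      = ((Finset.range n).filter p).card + (if p n then 1 else 0) := by
  rw [Finset.range_add_one, Finset.filter_insert]
  split_ifs with h
  · rw [Finset.card_insert_of_notMem (by simp)]
  · rfl

lemma upSteps_succ (X : ℕ → ℤ) (n : ℕ) (y : ℤ) :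
    upSteps X (n + 1) y
      = upSteps X n y + (if X n = y ∧ X (n + 1) = y + 1 then 1 else 0) :=
  filter_range_succ _ n

lemma downSteps_succ (X : ℕ → ℤ) (n : ℕ) (y : ℤ) :
    downSteps X (n + 1) y
      = downSteps X n y + (if X n = y ∧ X (n + 1) = y - 1 then 1 else 0) :=
  filter_range_succ _ n

lemma visits_succ (X : ℕ → ℤ) (n : ℕ) (y : ℤ) :
    visits X (n + 1) y = visits X n y + (if X (n + 1) = y then 1 else 0) :=
  filter_range_succ _ (n + 1)

lemma visits_zero (X : ℕ → ℤ) (y : ℤ) :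
    visits X 0 y = if X 0 = y then 1 else 0 := by
  unfold visits
  simp only [Nat.zero_add, Finset.range_one, Finset.filter_singleton]
  split_ifs <;> simp

lemma Icc_one_succ (k : ℕ) : Finset.Icc 1 (k + 1) = insert (k + 1) (Finset.Icc 1 k) := by
  ext j
  simp [Finset.mem_Icc]
  omega

lemma minusCount_succ (E : ℤ → ℕ → ℤ) (y : ℤ) (k : ℕ) :
    minusCount E y (k + 1)
      = minusCount E y k + (if E y (k + 1) = -1 then 1 else 0) := by
  unfold minusCount
  rw [Icc_one_succ, Finset.filter_insert]
  split_ifs with h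
  · rw [Finset.card_insert_of_notMem (by intro hmem; rw [Finset.mem_filter, Finset.mem_Icc] at hmem; omega)]
  · rfl

lemma unit_steps (E : ℤ → ℕ → ℤ) (X : ℕ → ℤ) (hA : IsArrow E) (hW : IsWalk E X) :
    ∀ n, X (n + 1) = X n + 1 ∨ X (n + 1) = X n - 1 := by
  intro n
  have h := hW.2 n
  rcases hA (X n) (visits X n (X n)) with h1 | h1 <;> rw [h1] at h
  · left; omega
  · right; omega

/-- F1 : visits = upsteps + downsteps (+1 if currently there). -/
lemma visits_eq (X : ℕ → ℤ) (hs : ∀ n, X (n + 1) = X n + 1 ∨ X (n + 1) = X n - 1)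
    (n : ℕ) (y : ℤ) :
    visits X n y = upSteps X n y + downSteps X n y + (if X n = y then 1 else 0) := by
  induction n with
  | zero => rw [visits_zero]; simp [upSteps, downSteps]
  | succ n ih =>
    rw [visits_succ, upSteps_succ, downSteps_succ]
    have := hs n
    split_ifs at * <;> omega

/-- F2 : visits = entries from the left + entries from the right (+ initial). -/
lemma visits_eq_entries (X : ℕ → ℤ) (hs : ∀ n, X (n + 1) = X n + 1 ∨ X (n + 1) = X n - 1)
    (n : ℕ) (y : ℤ) :
    visits X n y = upSteps X n (y - 1) + downSteps X n (y + 1)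
      + (if X 0 = y then 1 else 0) := by
  induction n with
  | zero => rw [visits_zero]; simp [upSteps, downSteps]
  | succ n ih =>
    rw [visits_succ, upSteps_succ, downSteps_succ]
    have := hs n
    split_ifs at * <;> omega

/-- F3 : edge-crossing balance for the edge `(y, y+1)`. -/
lemma edge_balance (X : ℕ → ℤ) (hs : ∀ n, X (n + 1) = X n + 1 ∨ X (n + 1) = X n - 1)
    (n : ℕ) (y : ℤ) :
    upSteps X n y + (if y + 1 ≤ X 0 then 1 else 0)
      = downSteps X n (y + 1) + (if y + 1 ≤ X n then 1 else 0) := by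
  induction n with
  | zero => simp [upSteps, downSteps]
  | succ n ih =>
    rw [upSteps_succ, downSteps_succ]
    have := hs n
    split_ifs at * <;> omega

/-- F4 : the down-steps from `y` are the minus arrows among the used arrows at `y`. -/
lemma downSteps_eq_minusCount (E : ℤ → ℕ → ℤ) (X : ℕ → ℤ)
    (hA : IsArrow E) (hW : IsWalk E X) :
    ∀ n y, downSteps X n y = minusCount E y (upSteps X n y + downSteps X n y) := by
  have hs := unit_steps E X hA hW
  intro n
  induction n with
  | zero => intro y; simp [upSteps, downSteps, minusCount]
  | succ n ih =>
    intro y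
    by_cases hy : X n = y
    · have hF1 := visits_eq X hs n y
      rw [if_pos hy] at hF1
      have hstep := hW.2 n
      rw [hy] at hstep
      rw [hF1] at hstep
      rcases hA y (upSteps X n y + downSteps X n y + 1) with h1 | h1 <;> rw [h1] at hstep
      · -- up-step
        have hup : X n = y ∧ X (n + 1) = y + 1 := ⟨hy, by omega⟩
        have hnd : ¬(X n = y ∧ X (n + 1) = y - 1) := by rintro ⟨-, h⟩; omega
        rw [upSteps_succ, downSteps_succ, if_pos hup, if_neg hnd]
        have e : upSteps X n y + 1 + (downSteps X n y + 0)
            = upSteps X n y + downSteps X n y + 1 := by omega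
        have hne : ¬ E y (upSteps X n y + downSteps X n y + 1) = -1 := by
          rw [h1]; decide
        rw [e, minusCount_succ, if_neg hne]
        have := ih y
        omega
      · -- down-step
        have hdn : X n = y ∧ X (n + 1) = y - 1 := ⟨hy, by omega⟩
        have hnu : ¬(X n = y ∧ X (n + 1) = y + 1) := by rintro ⟨-, h⟩; omega
        rw [upSteps_succ, downSteps_succ, if_neg hnu, if_pos hdn]
        have e : upSteps X n y + 0 + (downSteps X n y + 1)
            = upSteps X n y + downSteps X n y + 1 := by omega
        rw [e, minusCount_succ, if_pos h1]
        have := ih y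
        omega
    · rw [upSteps_succ, downSteps_succ, if_neg (fun h => hy h.1), if_neg (fun h => hy h.1)]
      simp only [Nat.add_zero]
      exact ih y

lemma sum_arrows (E : ℤ → ℕ → ℤ) (hA : IsArrow E) (y : ℤ) (k : ℕ) :
    ∑ j ∈ Finset.Icc 1 k, E y j = (k : ℤ) - 2 * (minusCount E y k : ℤ) := by
  induction k with
  | zero => simp [minusCount]
  | succ k ih =>
    rw [Icc_one_succ, Finset.sum_insert
      (by intro hmem; rw [Finset.mem_Icc] at hmem; omega), ih, minusCount_succ]
    rcases hA y (k + 1) with h | h <;> rw [h]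
    · rw [if_neg (by decide)]; push_cast; ring
    · rw [if_pos rfl]; push_cast; ring

lemma minusCount_le (L R : ℤ → ℕ → ℤ) (hL : IsArrow L) (hR : IsArrow R) (h : Prec L R)
    (y : ℤ) (k : ℕ) : minusCount R y k ≤ minusCount L y k := by
  have hp := h y k
  rw [sum_arrows L hL y k, sum_arrows R hR y k] at hp
  omega

lemma minusCount_mono (E : ℤ → ℕ → ℤ) (y : ℤ) {j k : ℕ} (h : j ≤ k) :
    minusCount E y j ≤ minusCount E y k :=
  Finset.card_le_card (Finset.filter_subset_filter _ (Finset.Icc_subset_Icc_right h))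

lemma downSteps_stable (X : ℕ → ℤ) (y : ℤ) (N : ℕ) (h : ∀ n ≥ N, y < X n) :
    ∀ n ≥ N, downSteps X n y = downSteps X N y := by
  intro n hn
  induction n, hn using Nat.le_induction with
  | base => rfl
  | succ n hn ih =>
    rw [downSteps_succ,
      if_neg (show ¬(X n = y ∧ X (n + 1) = y - 1) from fun hcc => by
        have := h n hn; omega),
      Nat.add_zero]
    exact ih

lemma visits_stable (X : ℕ → ℤ) (y : ℤ) (N : ℕ) (h : ∀ n ≥ N, y < X n) :
    ∀ n ≥ N, visits X n y = visits X N y := by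
  intro n hn
  induction n, hn using Nat.le_induction with
  | base => rfl
  | succ n hn ih =>
    rw [visits_succ,
      if_neg (show ¬ X (n + 1) = y from fun hcc => by
        have := h (n + 1) (by omega); omega),
      Nat.add_zero]
    exact ih

lemma downSteps_eq_zero (X : ℕ → ℤ) (y : ℤ) (n : ℕ)
    (h : ∀ m, ¬(X m = y ∧ X (m + 1) = y - 1)) : downSteps X n y = 0 := by
  unfold downSteps
  rw [Finset.card_eq_zero, Finset.filter_eq_empty_iff]
  exact fun m _ => h m

/-- Main comparison lemma: downsteps of the `R`-walk never exceed the bound `D`. -/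
lemma main_lemma (R : ℤ → ℕ → ℤ) (XR : ℕ → ℤ) (hR : IsArrow R) (hXR : IsWalk R XR)
    (D K : ℤ → ℕ)
    (h1 : ∀ (y : ℤ) (k : ℕ), D y < minusCount R y k → K y < k)
    (h2 : ∀ y : ℤ, K y + (if y ≤ 0 then 1 else 0)
        = D y + 1 + D (y + 1) + (if (0 : ℤ) = y then 1 else 0)) :
    ∀ n y, downSteps XR n y ≤ D y := by
  have hs := unit_steps R XR hR hXR
  intro n
  induction n with
  | zero => intro y; simp [downSteps]
  | succ n ih =>
    intro y
    rw [downSteps_succ]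
    by_cases hc : XR n = y ∧ XR (n + 1) = y - 1
    · rw [if_pos hc]
      obtain ⟨hy, hd⟩ := hc
      by_cases hlt : downSteps XR n y < D y
      · omega
      · have hDeq : downSteps XR n y = D y := by have := ih y; omega
        have hstep := hXR.2 n
        rw [hy] at hstep
        have hF1 := visits_eq XR hs n y
        rw [if_pos hy] at hF1
        have harrow : R y (visits XR n y) = -1 := by omega
        rw [hF1] at harrow
        have hF4 := downSteps_eq_minusCount R XR hR hXR n y
        have hmc : minusCount R y (upSteps XR n y + downSteps XR n y + 1)
            = downSteps XR n y + 1 := by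
          rw [minusCount_succ, if_pos harrow, ← hF4]
        have hKk : K y < visits XR n y := by
          apply h1
          rw [hF1, hmc]
          omega
        have hF2 := visits_eq_entries XR hs n y
        have hF3 := edge_balance XR hs n (y - 1)
        have e : y - 1 + 1 = y := by ring
        rw [e] at hF3
        rw [hXR.1] at hF2 hF3
        rw [hy] at hF3
        have hih := ih (y + 1)
        have h2y := h2 y
        split_ifs at hF2 hF3 h2y <;> omega
    · rw [if_neg hc]
      have := ih y
      omega

/-- If L ⪯ R and the walk L tends to +∞, then every regeneration
point of L is a regeneration point of R. -/
theorem stmt_6 (L R : ℤ → ℕ → ℤ) (hL : IsArrow L) (hR : IsArrow R) (hLR : Prec L R)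
    (XL XR : ℕ → ℤ) (hXL : IsWalk L XL) (hXR : IsWalk R XR)
    (hLtrans : Tendsto XL atTop atTop) :
    ∀ x : ℤ, Regen XL x → Regen XR x := by
  classical
  intro x hreg
  obtain ⟨hx0, TL, ⟨hTLhit, hTLfirst⟩, hTLge⟩ := hreg
  have stepL := unit_steps L XL hL hXL
  have stepR := unit_steps R XR hR hXR
  have hev : ∀ y : ℤ, ∃ N : ℕ, ∀ n ≥ N, y < XL n := fun y =>
    eventually_atTop.mp (hLtrans.eventually_gt_atTop y)
  choose NL hNL using hev
  -- hypothesis h1 of the main lemma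
  have h1 : ∀ (y : ℤ) (k : ℕ),
      downSteps XL (NL y) y < minusCount R y k → visits XL (NL y) y < k := by
    intro y k hk
    by_contra hkK
    push_neg at hkK
    have m1 : minusCount R y k ≤ minusCount L y k := minusCount_le L R hL hR hLR y k
    have m2 : minusCount L y k ≤ minusCount L y (visits XL (NL y) y) :=
      minusCount_mono L y hkK
    have hgt : y < XL (NL y) := hNL y (NL y) le_rfl
    have hF4 := downSteps_eq_minusCount L XL hL hXL (NL y) y
    have hF1 := visits_eq XL stepL (NL y) y
    rw [if_neg (by omega), Nat.add_zero] at hF1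
    rw [← hF1] at hF4
    omega
  -- hypothesis h2 of the main lemma
  have h2 : ∀ y : ℤ, visits XL (NL y) y + (if y ≤ 0 then 1 else 0)
      = downSteps XL (NL y) y + 1 + downSteps XL (NL (y + 1)) (y + 1)
        + (if (0 : ℤ) = y then 1 else 0) := by
    intro y
    set N := max (NL (y - 1)) (max (NL y) (NL (y + 1))) with hNdef
    have hN2 : NL y ≤ N := le_trans (le_max_left _ _) (le_max_right _ _)
    have hN3 : NL (y + 1) ≤ N := le_trans (le_max_right _ _) (le_max_right _ _)
    have sD : downSteps XL N y = downSteps XL (NL y) y :=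
      downSteps_stable XL y (NL y) (hNL y) N hN2
    have sD1 : downSteps XL N (y + 1) = downSteps XL (NL (y + 1)) (y + 1) :=
      downSteps_stable XL (y + 1) (NL (y + 1)) (hNL (y + 1)) N hN3
    have sV : visits XL N y = visits XL (NL y) y :=
      visits_stable XL y (NL y) (hNL y) N hN2
    have hF2 := visits_eq_entries XL stepL N y
    have hF3 := edge_balance XL stepL N (y - 1)
    have e : y - 1 + 1 = y := by ring
    rw [e] at hF3
    rw [hXL.1] at hF2 hF3
    have hyN : y < XL N := hNL y N hN2
    split_ifs at hF2 hF3 ⊢ <;> omega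
  have hmain : ∀ n y, downSteps XR n y ≤ downSteps XL (NL y) y := fun n y =>
    main_lemma R XR hR hXR (fun y => downSteps XL (NL y) y)
      (fun y => visits XL (NL y) y) h1 h2 n y
  -- the R-walk hits x
  have hhit : ∃ n, XR n = x := by
    by_contra hno
    push_neg at hno
    have hlt : ∀ n, XR n < x := by
      intro n
      induction n with
      | zero => have h0 := hXR.1; have := hno 0; omega
      | succ n ih => have := stepR n; have := hno (n + 1); omega
    obtain ⟨Nb, hNb⟩ := eventually_atTop.mp (hLtrans.eventually_gt_atTop 0)
    set S : Finset ℤ := insert 0 ((Finset.range (Nb + 1)).image XL) with hS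
    have hSne : S.Nonempty := ⟨0, Finset.mem_insert_self _ _⟩
    set b := S.min' hSne with hbdef
    have hb0 : b ≤ 0 := Finset.min'_le _ _ (Finset.mem_insert_self _ _)
    have hbXL : ∀ n, b ≤ XL n := by
      intro n
      rcases le_or_gt n Nb with h | h
      · exact Finset.min'_le _ _ (Finset.mem_insert_of_mem
          (Finset.mem_image_of_mem _ (Finset.mem_range.2 (by omega))))
      · have := hNb n (by omega)
        omega
    have hDb : downSteps XL (NL b) b = 0 :=
      downSteps_eq_zero XL b (NL b) (fun m hm => by
        obtain ⟨h1', h2'⟩ := hm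
        have := hbXL (m + 1)
        omega)
    have hXRb : ∀ n, b ≤ XR n := by
      intro n
      induction n with
      | zero => rw [hXR.1]; exact hb0
      | succ n ih =>
        by_contra hlt'
        push_neg at hlt'
        have hsn := stepR n
        have h1' : XR n = b := by omega
        have h2' : XR (n + 1) = b - 1 := by omega
        have hcc : XR n = b ∧ XR (n + 1) = b - 1 := ⟨h1', h2'⟩
        have := hmain (n + 1) b
        rw [downSteps_succ, if_pos hcc] at this
        omega
    have hvb : ∀ n y, visits XR n y
        ≤ downSteps XL (NL y) y + downSteps XL (NL (y + 1)) (y + 1) + 2 := by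
      intro n y
      have hF2 := visits_eq_entries XR stepR n y
      have hF3 := edge_balance XR stepR n (y - 1)
      have e : y - 1 + 1 = y := by ring
      rw [e] at hF3
      rw [hXR.1] at hF2 hF3
      have hm1 := hmain n y
      have hm2 := hmain n (y + 1)
      split_ifs at hF2 hF3 <;> omega
    have hbound : ∀ n : ℕ, n + 1 ≤ ∑ y ∈ Finset.Icc b (x - 1),
        (downSteps XL (NL y) y + downSteps XL (NL (y + 1)) (y + 1) + 2) := by
      intro n
      have hcard := Finset.card_eq_sum_card_fiberwise
        (f := XR) (s := Finset.range (n + 1)) (t := Finset.Icc b (x - 1))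
        (fun m _ => Finset.mem_Icc.2 ⟨hXRb m, by have := hlt m; omega⟩)
      rw [Finset.card_range] at hcard
      have hle : ∑ y ∈ Finset.Icc b (x - 1),
            ((Finset.range (n + 1)).filter (fun m => XR m = y)).card
          ≤ ∑ y ∈ Finset.Icc b (x - 1),
            (downSteps XL (NL y) y + downSteps XL (NL (y + 1)) (y + 1) + 2) :=
        Finset.sum_le_sum (fun y _ => hvb n y)
      omega
    have := hbound (∑ y ∈ Finset.Icc b (x - 1),
      (downSteps XL (NL y) y + downSteps XL (NL (y + 1)) (y + 1) + 2))
    omega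
  -- conclusion
  have hDx : downSteps XL (NL x) x = 0 :=
    downSteps_eq_zero XL x (NL x) (fun m hm => by
      obtain ⟨h1', h2'⟩ := hm
      rcases lt_or_ge m TL with h | h
      · exact hTLfirst m h h1'
      · have := hTLge (m + 1) (by omega)
        omega)
  refine ⟨hx0, Nat.find hhit, ⟨Nat.find_spec hhit, fun m hm => Nat.find_min hhit hm⟩, ?_⟩
  intro n hn
  induction n, hn using Nat.le_induction with
  | base => exact le_of_eq (Nat.find_spec hhit).symm
  | succ n hn ih =>
    rcases stepR n with h | h
    · omega
    · by_contra hlt'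
      push_neg at hlt'
      have h1' : XR n = x := by omega
      have h2' : XR (n + 1) = x - 1 := by omega
      have hcc : XR n = x ∧ XR (n + 1) = x - 1 := ⟨h1', h2'⟩
      have := hmain (n + 1) x
      rw [downSteps_succ, if_pos hcc] at this
      omega
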